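/- arXiv:2308.03434 — 5 statements merged into one kernel-verified Lean document; each statement's English description precedes it below -/
import Mathlib

section
/- Let G be a split graph with a KS-partition (A,B) such that |A| = ω(G) and |B| = α(G), where ω and α are the clique number and independence number. Then (A,B) is the unique KS-partition of G; consequently every automorphism of G maps A onto A and B onto B. -/
/-!
If `(A, B)` and `(A', B')` are two KS-partitions and `a ∈ A \ A'`, `b ∈ A' \ A`, then a clique and an
independent set meet in at most one vertex, so `A \ {a} ⊆ A'` and `B \ {b} ⊆ B'`. Hence if `a ~ b`
then `A ∪ {b}` is a clique, and otherwise `B ∪ {a}` is independent. In a balanced split graph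
`|A'| ≤ ω = |A|` and `|B'| ≤ α = |B|` force `|A'| = |A|`, so `A' ≠ A` would produce both `a` and `b`,
and with them a clique larger than `ω` or an independent set larger than `α`. An automorphism maps
`(A, B)` to a KS-partition, which must therefore be `(A, B)` itself.
-/

open Finset

namespace SimpleGraph

variable {V W : Type*} {G : SimpleGraph V}

/-- `A` is the clique side of the KS-partition `(A, Aᶜ)`. -/
def IsSplitClique (G : SimpleGraph V) (A : Set V) : Prop :=
  G.IsClique A ∧ G.IsIndepSet Aᶜ

theorem IsClique.eq_of_mem_isIndepSet {s t : Set V} {x y : V} (hs : G.IsClique s)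
    (ht : G.IsIndepSet t) (hxs : x ∈ s) (hxt : x ∈ t) (hys : y ∈ s) (hyt : y ∈ t) : x = y :=
  by_contra fun hxy ↦ ht hxt hyt hxy (hs hxs hys hxy)

theorem IsIndepSet.not_adj {s : Set V} (hs : G.IsIndepSet s) {x y : V} (hx : x ∈ s)
    (hy : y ∈ s) : ¬G.Adj x y := fun hxy ↦ hs hx hy hxy.ne hxy

theorem IsSplitClique.isClique_insert_or_isIndepSet_insert {A A' : Set V}
    (hA : G.IsSplitClique A) (hA' : G.IsSplitClique A') {a b : V} (haA : a ∈ A) (haA' : a ∉ A')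
    (hbA : b ∉ A) (hbA' : b ∈ A') : G.IsClique (insert b A) ∨ G.IsIndepSet (insert a Aᶜ) := by
  by_cases hab : G.Adj a b
  · refine .inl (hA.1.insert fun z hzA hbz ↦ ?_)
    by_cases hza : z = a
    · exact hza ▸ hab.symm
    have hzA' : z ∈ A' := by
      by_contra hzA'
      exact hza (hA.1.eq_of_mem_isIndepSet hA'.2 hzA hzA' haA haA')
    exact hA'.1 hbA' hzA' hbz
  · refine .inr (hA.2.insert fun z hzA _ ↦ ?_)
    have haz : ¬G.Adj a z := by
      by_cases hzb : z = b
      · exact hzb ▸ hab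
      have hzA' : z ∉ A' := fun hzA' ↦
        hzb (hA'.1.eq_of_mem_isIndepSet hA.2 hzA' hzA hbA' hbA)
      exact hA'.2.not_adj haA' hzA'
    exact ⟨haz, fun hza ↦ haz hza.symm⟩

theorem IsSplitClique.image {H : SimpleGraph W} {A : Set V} (hA : G.IsSplitClique A)
    (π : G ≃g H) : H.IsSplitClique (π '' A) := by
  refine ⟨?_, ?_⟩
  · rintro _ ⟨x, hx, rfl⟩ _ ⟨y, hy, rfl⟩ hxy
    exact π.map_adj_iff.2 (hA.1 hx hy (ne_of_apply_ne _ hxy))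
  · rw [← Set.image_compl_eq π.bijective]
    rintro _ ⟨x, hx, rfl⟩ _ ⟨y, hy, rfl⟩ _
    exact π.map_adj_iff.not.2 (hA.2.not_adj hx hy)

theorem IsSplitClique.eq_of_forall_card_le [Fintype V] [DecidableEq V] {A A' : Finset V}
    (hA : G.IsSplitClique A) (hω : ∀ s : Finset V, G.IsClique (s : Set V) → #s ≤ #A)
    (hα : ∀ s : Finset V, G.IsIndepSet (s : Set V) → #s ≤ #Aᶜ)
    (hA' : G.IsSplitClique A') : A' = A := by
  have hcard : #A' = #A := by
    have hindep_le := hα A'ᶜ (by rw [coe_compl]; exact hA'.2)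
    rw [card_compl, card_compl] at hindep_le
    have hclique_le := hω A' hA'.1
    have hA_le := card_le_univ A
    have hA'_le := card_le_univ A'
    omega
  by_contra hne
  obtain ⟨a, haA, haA'⟩ := not_subset.1 fun h ↦ hne (eq_of_subset_of_card_le h hcard.le).symm
  obtain ⟨b, hbA', hbA⟩ := not_subset.1 fun h ↦ hne (eq_of_subset_of_card_le h hcard.ge)
  rcases hA.isClique_insert_or_isIndepSet_insert hA' haA (mem_coe.not.2 haA') (mem_coe.not.2 hbA)
      hbA' with hclique | hindep
  · have hle := hω (insert b A) (by rwa [coe_insert])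
    rw [card_insert_of_notMem hbA] at hle
    omega
  · have hle := hα (insert a Aᶜ) (by rwa [coe_insert, coe_compl])
    rw [card_insert_of_notMem (notMem_compl.2 haA)] at hle
    omega

end SimpleGraph

open SimpleGraph

/-- A balanced split graph (one whose KS-partition `(A,B)` satisfies `|A| = ω(G)` and
`|B| = α(G)`) has a unique KS-partition; consequently every automorphism of `G` maps `A`
onto `A` and `B` onto `B`. -/
theorem balanced_split_unique_KS {V : Type*} [Fintype V] [DecidableEq V]
    (G : SimpleGraph V) (A B : Finset V)
    (hpart : A ∪ B = Finset.univ) (hdisj : Disjoint A B)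
    (hclique : ∀ a ∈ A, ∀ b ∈ A, a ≠ b → G.Adj a b)
    (hindep : ∀ a ∈ B, ∀ b ∈ B, ¬ G.Adj a b)
    (hA : ∀ s : Finset V, (∀ a ∈ s, ∀ b ∈ s, a ≠ b → G.Adj a b) → s.card ≤ A.card)
    (hB : ∀ s : Finset V, (∀ a ∈ s, ∀ b ∈ s, ¬ G.Adj a b) → s.card ≤ B.card) :
    (∀ A' B' : Finset V, A' ∪ B' = Finset.univ → Disjoint A' B' →
      (∀ a ∈ A', ∀ b ∈ A', a ≠ b → G.Adj a b) →
      (∀ a ∈ B', ∀ b ∈ B', ¬ G.Adj a b) → A' = A ∧ B' = B) ∧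
    (∀ π : G ≃g G, (∀ v, π v ∈ A ↔ v ∈ A) ∧ (∀ v, π v ∈ B ↔ v ∈ B)) := by
  have hsplit : ∀ {A' B' : Finset V}, A' ∪ B' = univ → Disjoint A' B' →
      (∀ a ∈ A', ∀ b ∈ A', a ≠ b → G.Adj a b) → (∀ a ∈ B', ∀ b ∈ B', ¬ G.Adj a b) →
      B' = A'ᶜ ∧ G.IsSplitClique A' := fun {A' B'} hp hd hc hi ↦
    have hB' : B' = A'ᶜ := (IsCompl.compl_eq ⟨hd, codisjoint_iff.2 hp⟩).symm
    ⟨hB', fun x hx y hy ↦ hc x hx y hy,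
      by rw [← coe_compl, ← hB']; exact fun x hx y hy _ ↦ hi x hx y hy⟩
  obtain ⟨rfl, hAsplit⟩ := hsplit hpart hdisj hclique hindep
  have huniq : ∀ A' : Finset V, G.IsSplitClique A' → A' = A :=
    fun A' ↦ hAsplit.eq_of_forall_card_le (fun s hs ↦ hA s fun _ ha _ hb ↦ hs ha hb)
      (fun s hs ↦ hB s fun _ ha _ hb ↦ hs.not_adj ha hb)
  refine ⟨fun A' B' hp hd hc hi ↦ ?_, fun π ↦ ?_⟩
  · obtain ⟨rfl, hA'split⟩ := hsplit hp hd hc hi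
    obtain rfl := huniq A' hA'split
    exact ⟨rfl, rfl⟩
  · have himage : A.image π = A := huniq _ (by rw [coe_image]; exact hAsplit.image π)
    have hmem : ∀ v, π v ∈ A ↔ v ∈ A := fun v ↦ by
      simpa only [himage] using π.injective.mem_finset_image (s := A) (a := v)
    exact ⟨hmem, fun v ↦ by simp only [mem_compl, hmem]⟩
end

section
/- Let G = mH be the disjoint union of m copies of a connected graph H, and let D(H,c) denote the number of inequivalent distinguishing c-labelings of H. Then D(G) = min { c : D(H,c) ≥ m }. -/
/-!
Since `H` is connected, every automorphism of `mH` permutes the copies and acts on each copy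
by an automorphism of `H`. Hence a labeling of `mH` is distinguishing exactly when its
restrictions to the copies are distinguishing labelings of `H` lying in pairwise distinct
equivalence classes, and such a labeling with `c` labels exists iff `D(H,c) ≥ m`.
-/

/-- A `c`-labeling `φ` of the vertices of `G` is distinguishing if the only automorphism of `G`
preserving all labels is the identity. -/
def IsDistinguishing {V : Type*} (G : SimpleGraph V) {c : ℕ} (φ : V → Fin c) : Prop :=
  ∀ π : G ≃g G, (∀ v, φ (π v) = φ v) → ∀ v, π v = v

/-- The distinguishing number of a graph. -/
noncomputable def distNum {V : Type*} (G : SimpleGraph V) : ℕ :=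
  sInf {c : ℕ | ∃ φ : V → Fin c, IsDistinguishing G φ}

/-- Two distinguishing `c`-labelings of `G` are equivalent if some automorphism of `G`
carries one to the other. -/
def distLabelSetoid {V : Type*} (G : SimpleGraph V) (c : ℕ) :
    Setoid {φ : V → Fin c // IsDistinguishing G φ} where
  r φ ψ := ∃ π : G ≃g G, ∀ v, ψ.1 v = φ.1 (π v)
  iseqv := by
    constructor
    · intro φ; exact ⟨SimpleGraph.Iso.refl, fun v => rfl⟩
    · rintro φ ψ ⟨π, h⟩
      refine ⟨π.symm, fun v => ?_⟩
      rw [h (π.symm v), π.apply_symm_apply v]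
    · rintro φ ψ χ ⟨π, h⟩ ⟨σ, h2⟩
      exact ⟨σ.trans π, fun v => by rw [h2 v, h (σ v)]; rfl⟩

/-- The number of inequivalent distinguishing `c`-labelings of a graph, denoted `D(G,c)`. -/
noncomputable def distLabelCount {V : Type*} (G : SimpleGraph V) (c : ℕ) : ℕ :=
  Nat.card (Quotient (distLabelSetoid G c))

/-- The disjoint union `mH` of `m` copies of a graph `H`. -/
def copies {V : Type*} (m : ℕ) (H : SimpleGraph V) : SimpleGraph (Fin m × V) where
  Adj x y := x.1 = y.1 ∧ H.Adj x.2 y.2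
  symm := ⟨by rintro x y ⟨h1, h2⟩; exact ⟨h1.symm, h2.symm⟩⟩
  loopless := ⟨by rintro x ⟨-, h⟩; exact H.loopless.irrefl _ h⟩

open Function

section

variable {V : Type*} {H : SimpleGraph V} {m c : ℕ}

def copiesAut (σ : Equiv.Perm (Fin m)) (τ : Fin m → H ≃g H) : copies m H ≃g copies m H where
  toFun x := (σ x.1, τ x.1 x.2)
  invFun x := (σ.symm x.1, (τ (σ.symm x.1)).symm x.2)
  left_inv x := by simp
  right_inv x := by simp
  map_rel_iff' {x y} := by
    obtain ⟨i, v⟩ := x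
    obtain ⟨j, w⟩ := y
    change σ i = σ j ∧ H.Adj (τ i v) (τ j w) ↔ i = j ∧ H.Adj v w
    rw [σ.injective.eq_iff]
    exact and_congr_right fun h => h ▸ (τ i).map_adj_iff

@[simp]
lemma copiesAut_apply (σ : Equiv.Perm (Fin m)) (τ : Fin m → H ≃g H) (x : Fin m × V) :
    copiesAut σ τ x = (σ x.1, τ x.1 x.2) :=
  rfl

lemma SimpleGraph.Connected.fst_copiesHom_eq {W : Type*} {K : SimpleGraph W} {n : ℕ}
    (hconn : H.Connected) (f : copies m H →g copies n K) (i : Fin m) (v w : V) :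
    (f (i, v)).1 = (f (i, w)).1 := by
  obtain ⟨p⟩ := hconn.preconnected v w
  induction p with
  | nil => rfl
  | @cons a b _ hadj _ ih =>
    exact (f.map_adj (show (copies m H).Adj (i, a) (i, b) from ⟨rfl, hadj⟩)).1.trans ih

/-- Connectedness sends each copy into a single copy; the induced self-embedding of `H` is onto
because `V` is finite. -/
lemma SimpleGraph.Connected.exists_copiesAut_apply [Finite V] (hconn : H.Connected)
    (π : copies m H ≃g copies m H) (i : Fin m) :
    ∃ j, ∃ τ : H ≃g H, ∀ v, π (i, v) = (j, τ v) := by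
  obtain ⟨v₀⟩ := hconn.nonempty
  have hfst (v : V) : (π (i, v)).1 = (π (i, v₀)).1 :=
    hconn.fst_copiesHom_eq π.toHom i v v₀
  have hπ (v : V) : π (i, v) = ((π (i, v₀)).1, (π (i, v)).2) := Prod.ext (hfst v) rfl
  let f : H ↪g H :=
    { toFun v := (π (i, v)).2
      inj' v w h := by
        have : π (i, v) = π (i, w) := by rw [hπ v, hπ w]; exact Prod.ext rfl h
        exact congrArg Prod.snd (π.injective this)
      map_rel_iff' {v w} := by
        change H.Adj (π (i, v)).2 (π (i, w)).2 ↔ H.Adj v w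
        rw [← show (copies m H).Adj (i, v) (i, w) ↔ H.Adj v w from and_iff_right rfl,
          ← π.map_adj_iff, hπ v, hπ w]
        exact (and_iff_right rfl).symm }
  exact ⟨_, RelIso.ofSurjective f (Finite.surjective_of_injective f.injective), hπ⟩

namespace IsDistinguishing

variable {Φ : Fin m × V → Fin c}

lemma eq_of_copiesAut (hΦ : IsDistinguishing (copies m H) Φ) {σ : Equiv.Perm (Fin m)}
    {τ : Fin m → H ≃g H} (h : ∀ i v, Φ (σ i, τ i v) = Φ (i, v)) (i : Fin m) (v : V) :
    σ i = i ∧ τ i v = v :=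
  Prod.ext_iff.mp (hΦ (copiesAut σ τ) (fun x => h x.1 x.2) (i, v))

lemma restrict (hΦ : IsDistinguishing (copies m H) Φ) (i : Fin m) :
    IsDistinguishing H (fun v => Φ (i, v)) := by
  intro τ hτ v
  have hlab (j : Fin m) (w : V) :
      Φ ((1 : Equiv.Perm (Fin m)) j, update (1 : Fin m → H ≃g H) i τ j w) = Φ (j, w) := by
    rcases eq_or_ne j i with rfl | hji
    · simpa using hτ w
    · simp [hji]
  simpa using (hΦ.eq_of_copiesAut hlab i v).2

/-- Exchanging copies `i` and `j` along an automorphism relating their restrictions preserves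
`Φ`, which forces `i = j`. -/
lemma injective_mk_restrict [Nonempty V] (hΦ : IsDistinguishing (copies m H) Φ) :
    Injective fun i =>
      (⟦⟨fun v => Φ (i, v), hΦ.restrict i⟩⟧ : Quotient (distLabelSetoid H c)) := by
  intro i j hij
  by_contra hne
  obtain ⟨τ, hτ⟩ := Quotient.exact hij
  have hlab (k : Fin m) (w : V) :
      Φ (Equiv.swap i j k, update (update (1 : Fin m → H ≃g H) j τ) i τ.symm k w) =
        Φ (k, w) := by
    rcases eq_or_ne k i with rfl | hki
    · simpa using hτ (τ.symm w)
    rcases eq_or_ne k j with rfl | hkj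
    · simpa [hki] using (hτ w).symm
    · simp [hki, hkj, Equiv.swap_apply_of_ne_of_ne hki hkj]
  have hswap := (hΦ.eq_of_copiesAut hlab i (Classical.arbitrary _)).1
  exact hne (by simpa using hswap.symm)

lemma le_distLabelCount [Finite V] [Nonempty V] (hΦ : IsDistinguishing (copies m H) Φ) :
    m ≤ distLabelCount H c := by
  simpa [distLabelCount] using Nat.card_le_card_of_injective _ hΦ.injective_mk_restrict

end IsDistinguishing

lemma isDistinguishing_copies_of_injective [Finite V] (hconn : H.Connected)
    (ψ : Fin m → {φ : V → Fin c // IsDistinguishing H φ})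
    (hψ : Injective fun i => (⟦ψ i⟧ : Quotient (distLabelSetoid H c))) :
    IsDistinguishing (copies m H) (fun x => (ψ x.1).1 x.2) := by
  rintro π hπ ⟨i, v⟩
  obtain ⟨j, τ, hτ⟩ := hconn.exists_copiesAut_apply π i
  have hlab (w : V) : (ψ j).1 (τ w) = (ψ i).1 w := by simpa [hτ] using hπ (i, w)
  obtain rfl : j = i := hψ (Quotient.sound ⟨τ, fun w => (hlab w).symm⟩)
  rw [hτ, (ψ j).2 τ hlab v]

end

theorem distNum_copies_general {V : Type*} [Fintype V] (H : SimpleGraph V)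
    (hconn : H.Connected) (m : ℕ) :
    distNum (copies m H) = sInf {c : ℕ | m ≤ distLabelCount H c} := by
  have := hconn.nonempty
  refine congrArg sInf <| Set.ext fun c =>
    ⟨fun ⟨Φ, hΦ⟩ => hΦ.le_distLabelCount, fun hc => ?_⟩
  let e : Fin m ↪ Quotient (distLabelSetoid H c) :=
    (Fin.castLEEmb hc).trans (Finite.equivFin _).symm.toEmbedding
  exact ⟨_, isDistinguishing_copies_of_injective hconn (fun i => (e i).out)
    (by simpa using e.injective)⟩

/-- For a connected finite graph `H` and `m ≥ 1`, the distinguishing number of the disjoint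
union of `m` copies of `H` is the least `c` with at least `m` inequivalent distinguishing
`c`-labelings of `H`. -/
theorem distNum_copies {V : Type*} [Fintype V] (H : SimpleGraph V)
    (hconn : H.Connected) (m : ℕ) (hm : 1 ≤ m) :
    distNum (copies m H) = sInf {c : ℕ | m ≤ distLabelCount H c} :=
  distNum_copies_general H hconn m
end

section
/- For p ≥ 1 and q ≥ 2, the distinguishing number of S(p,q) is min { c : c · C(c,p) ≥ q }, where S(p,q) is the graph consisting of q disjoint stars K_{1,p} whose centers are made pairwise adjacent. -/
/-- The graph `S(p,q)`: `q` disjoint stars `K_{1,p}` whose centers are made pairwise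
adjacent.  `Sum.inl i` is the `i`-th center, `Sum.inr (i, k)` the `k`-th leaf of star `i`. -/
def starsGraph (p q : ℕ) : SimpleGraph (Fin q ⊕ Fin q × Fin p) where
  Adj x y := match x, y with
    | .inl i, .inl j => i ≠ j
    | .inl i, .inr z => i = z.1
    | .inr z, .inl i => z.1 = i
    | .inr _, .inr _ => False
  symm := by
    constructor
    rintro (i | z) (j | w) h
    · exact h.symm
    · exact h.symm
    · exact h.symm
    · exact h
  loopless := by
    constructor
    rintro (i | z) h
    · exact h rfl
    · exact h

open Function Finset

lemma image_univ_comp_of_injective_comp {α β : Type*} [Fintype α] [DecidableEq α] [DecidableEq β]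
    {g : α → β} {t : α → α} (h : Injective (g ∘ t)) :
    univ.image (g ∘ t) = univ.image g := by
  rw [← image_image, image_univ_of_surjective (Finite.surjective_of_injective h.of_comp)]

lemma exists_perm_comp_eq_of_image_univ_eq {α β : Type*} [Fintype α] [DecidableEq β]
    {f g : α → β} (hf : Injective f) (hg : Injective g) (h : univ.image f = univ.image g) :
    ∃ τ : Equiv.Perm α, g ∘ τ = f := by
  have hrange : Set.range f = Set.range g := by
    simpa only [coe_image, coe_univ, Set.image_univ] using congrArg ((↑) : Finset β → Set β) h
  refine ⟨(Equiv.ofInjective f hf).trans ((Equiv.setCongr hrange).trans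
    (Equiv.ofInjective g hg).symm), funext fun a => ?_⟩
  simp [Equiv.apply_ofInjective_symm]

namespace starsGraph

variable {p q c : ℕ}

lemma eq_inl_of_adj_inr {z : Fin q × Fin p} {x : Fin q ⊕ Fin q × Fin p}
    (h : (starsGraph p q).Adj (.inr z) x) : x = .inl z.1 := by
  cases x with
  | inl j => rw [show z.1 = j from h]
  | inr w => exact h.elim

def wreath (σ : Equiv.Perm (Fin q)) (τ : Fin q → Equiv.Perm (Fin p)) :
    starsGraph p q ≃g starsGraph p q where
  toEquiv := Equiv.sumCongr σ (Equiv.prodShear σ τ)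
  map_rel_iff' := by
    rintro (i | ⟨i, k⟩) (j | ⟨j, m⟩) <;> simp [starsGraph]

@[simp] lemma wreath_inl (σ : Equiv.Perm (Fin q)) (τ : Fin q → Equiv.Perm (Fin p)) (i : Fin q) :
    wreath σ τ (.inl i) = .inl (σ i) := rfl

@[simp] lemma wreath_inr (σ : Equiv.Perm (Fin q)) (τ : Fin q → Equiv.Perm (Fin p))
    (z : Fin q × Fin p) : wreath σ τ (.inr z) = .inr (σ z.1, τ z.1 z.2) := rfl

/-- A leaf has a single neighbour, whereas a center has at least two when `q ≥ 2` (another center,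
and a leaf as soon as any leaf exists at all). -/
lemma exists_apply_inl_eq (hq : 2 ≤ q) (π : starsGraph p q ≃g starsGraph p q) (i : Fin q) :
    ∃ j, π (.inl i) = .inl j := by
  cases hπ : π (.inl i) with
  | inl j => exact ⟨j, rfl⟩
  | inr z =>
    have : Nontrivial (Fin q) := Fin.nontrivial_iff_two_le.mpr hq
    obtain ⟨j, hji⟩ := exists_ne i
    have h_center : (starsGraph p q).Adj (π (.inl i)) (π (.inl j)) :=
      π.map_rel_iff.mpr (show i ≠ j from hji.symm)
    have h_leaf : (starsGraph p q).Adj (π (.inl i)) (π (.inr (i, z.2))) :=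
      π.map_rel_iff.mpr (show i = i from rfl)
    rw [hπ] at h_center h_leaf
    have := π.injective ((eq_inl_of_adj_inr h_center).trans (eq_inl_of_adj_inr h_leaf).symm)
    simp at this

lemma exists_apply_inr_eq (hq : 2 ≤ q) (π : starsGraph p q ≃g starsGraph p q) {i j : Fin q}
    (hij : π (.inl i) = .inl j) (k : Fin p) : ∃ m, π (.inr (i, k)) = .inr (j, m) := by
  have hadj : (starsGraph p q).Adj (π (.inl i)) (π (.inr (i, k))) :=
    π.map_rel_iff.mpr (show i = i from rfl)
  rw [hij] at hadj
  cases hπ : π (.inr (i, k)) with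
  | inl j' =>
    obtain ⟨i', hi'⟩ := exists_apply_inl_eq hq π.symm j'
    rw [← hπ, π.symm_apply_apply] at hi'
    cases hi'
  | inr w =>
    rw [hπ] at hadj
    exact ⟨w.2, by rw [show j = w.1 from hadj]⟩

def leafLabel (φ : Fin q ⊕ Fin q × Fin p → Fin c) (i : Fin q) : Fin p → Fin c :=
  fun k => φ (.inr (i, k))

def starLabel (φ : Fin q ⊕ Fin q × Fin p → Fin c) (i : Fin q) : Fin c × Finset (Fin c) :=
  (φ (.inl i), univ.image (leafLabel φ i))

lemma label_wreath_apply {φ : Fin q ⊕ Fin q × Fin p → Fin c} {σ : Equiv.Perm (Fin q)}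
    {τ : Fin q → Equiv.Perm (Fin p)} (h_center : ∀ i, φ (.inl (σ i)) = φ (.inl i))
    (h_leaf : ∀ i, leafLabel φ (σ i) ∘ τ i = leafLabel φ i) (v : Fin q ⊕ Fin q × Fin p) :
    φ (wreath σ τ v) = φ v := by
  rcases v with i | ⟨i, k⟩
  · exact h_center i
  · exact congrFun (h_leaf i) k

lemma injective_leafLabel_of_isDistinguishing {φ : Fin q ⊕ Fin q × Fin p → Fin c}
    (hφ : IsDistinguishing (starsGraph p q) φ) (i : Fin q) : Injective (leafLabel φ i) := by
  intro k k' hkk'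
  have h_leaf (j : Fin q) : leafLabel φ ((1 : Equiv.Perm (Fin q)) j) ∘
      (Pi.mulSingle i (Equiv.swap k k') : Fin q → Equiv.Perm (Fin p)) j = leafLabel φ j := by
    rw [Equiv.Perm.one_apply, Pi.mulSingle_apply]
    split_ifs with hji
    · subst hji
      rw [Equiv.comp_swap_eq_update, hkk', update_eq_self, ← hkk', update_eq_self]
    · rfl
  have hfix := hφ _ (label_wreath_apply (fun _ => rfl) h_leaf) (.inr (i, k))
  simpa using hfix.symm

lemma injective_starLabel_of_isDistinguishing {φ : Fin q ⊕ Fin q × Fin p → Fin c}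
    (hφ : IsDistinguishing (starsGraph p q) φ) : Injective (starLabel φ) := by
  intro i j hij
  by_contra hne
  obtain ⟨h_center, h_leaves⟩ := Prod.ext_iff.mp hij
  obtain ⟨τ, hτ⟩ := exists_perm_comp_eq_of_image_univ_eq
    (injective_leafLabel_of_isDistinguishing hφ i)
    (injective_leafLabel_of_isDistinguishing hφ j) h_leaves
  have hτ_symm : leafLabel φ i ∘ τ.symm = leafLabel φ j := by
    rw [← hτ, comp_assoc, Equiv.self_comp_symm, comp_id]
  let τs : Fin q → Equiv.Perm (Fin p) := fun m => if m = i then τ else if m = j then τ.symm else 1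
  have h_center' (m : Fin q) : φ (.inl (Equiv.swap i j m)) = φ (.inl m) := by
    rcases eq_or_ne m i with rfl | hmi
    · rw [Equiv.swap_apply_left]; exact h_center.symm
    rcases eq_or_ne m j with rfl | hmj
    · rw [Equiv.swap_apply_right]; exact h_center
    · rw [Equiv.swap_apply_of_ne_of_ne hmi hmj]
  have h_leaf (m : Fin q) : leafLabel φ (Equiv.swap i j m) ∘ τs m = leafLabel φ m := by
    rcases eq_or_ne m i with rfl | hmi
    · simpa [τs] using hτ
    rcases eq_or_ne m j with rfl | hmj
    · simpa [τs, hmi] using hτ_symm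
    · simp [τs, hmi, hmj, Equiv.swap_apply_of_ne_of_ne]
  have hfix := hφ _ (label_wreath_apply h_center' h_leaf) (.inl i)
  simp only [wreath_inl, Equiv.swap_apply_left, Sum.inl.injEq] at hfix
  exact hne hfix.symm

lemma isDistinguishing_of_injective {φ : Fin q ⊕ Fin q × Fin p → Fin c} (hq : 2 ≤ q)
    (h_leaf : ∀ i, Injective (leafLabel φ i)) (h_star : Injective (starLabel φ)) :
    IsDistinguishing (starsGraph p q) φ := by
  intro π hπ
  choose σ hσ using exists_apply_inl_eq hq π
  choose τ hτ using fun i => exists_apply_inr_eq hq π (hσ i)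
  have h_center (i : Fin q) : φ (.inl (σ i)) = φ (.inl i) := by rw [← hσ]; exact hπ _
  have h_leaves (i : Fin q) : leafLabel φ (σ i) ∘ τ i = leafLabel φ i :=
    funext fun k => by simp only [comp_apply, leafLabel, ← hτ]; exact hπ _
  have hσ_id (i : Fin q) : σ i = i := by
    refine h_star (Prod.ext (h_center i) ?_)
    have h_inj : Injective (leafLabel φ (σ i) ∘ τ i) := h_leaves i ▸ h_leaf i
    rw [starLabel, starLabel, ← image_univ_comp_of_injective_comp h_inj, h_leaves]
  have hτ_id (i : Fin q) (k : Fin p) : τ i k = k := by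
    have := congrFun (h_leaves i) k
    rw [comp_apply, hσ_id] at this
    exact h_leaf i this
  rintro (i | ⟨i, k⟩)
  · rw [hσ, hσ_id]
  · rw [hτ, hσ_id, hτ_id]

lemma isDistinguishing_iff (hq : 2 ≤ q) {φ : Fin q ⊕ Fin q × Fin p → Fin c} :
    IsDistinguishing (starsGraph p q) φ ↔
      (∀ i, Injective (leafLabel φ i)) ∧ Injective (starLabel φ) :=
  ⟨fun hφ => ⟨injective_leafLabel_of_isDistinguishing hφ,
      injective_starLabel_of_isDistinguishing hφ⟩,
    fun h => isDistinguishing_of_injective hq h.1 h.2⟩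

/-- When leaf labels are injective, star labels range over the pairs (label, `p`-subset of labels),
of which there are `c · C(c,p)`. -/
lemma exists_injective_starLabel_iff :
    (∃ φ : Fin q ⊕ Fin q × Fin p → Fin c,
      (∀ i, Injective (leafLabel φ i)) ∧ Injective (starLabel φ)) ↔ q ≤ c * c.choose p := by
  constructor
  · rintro ⟨φ, h_leaf, h_star⟩
    have h_maps : Set.MapsTo (starLabel φ) (univ : Finset (Fin q))
        (univ ×ˢ powersetCard p univ : Finset (Fin c × Finset (Fin c))) := fun i _ => by
      simp [starLabel, card_image_of_injective _ (h_leaf i)]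
    simpa using card_le_card_of_injOn _ h_maps h_star.injOn
  · intro hc
    obtain ⟨f⟩ : Nonempty (Fin q ↪ Fin c × {s : Finset (Fin c) // s.card = p}) :=
      Embedding.nonempty_of_card_le (by simpa using hc)
    let φ : Fin q ⊕ Fin q × Fin p → Fin c :=
      Sum.elim (fun i => (f i).1) (fun z => (f z.1).2.1.orderEmbOfFin (f z.1).2.2 z.2)
    have h_star : starLabel φ = Prod.map id Subtype.val ∘ f :=
      funext fun i => Prod.ext rfl (image_orderEmbOfFin_univ (f i).2.1 (f i).2.2)
    refine ⟨φ, fun i => (orderEmbOfFin _ (f i).2.2).injective, ?_⟩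
    rw [h_star]
    exact (injective_id.prodMap Subtype.val_injective).comp f.injective

end starsGraph

theorem distNum_starsGraph_general (p q : ℕ) (hq : 2 ≤ q) :
    distNum (starsGraph p q) = sInf {c : ℕ | q ≤ c * c.choose p} := by
  have h_set : {c : ℕ | ∃ φ : Fin q ⊕ Fin q × Fin p → Fin c,
      IsDistinguishing (starsGraph p q) φ} = {c : ℕ | q ≤ c * c.choose p} := by
    ext c
    exact (exists_congr fun φ => starsGraph.isDistinguishing_iff hq).trans
      starsGraph.exists_injective_starLabel_iff
  rw [distNum, h_set]

/-- For `p ≥ 1`, `q ≥ 2`, the distinguishing number of `S(p,q)` is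
`min { c : c · C(c,p) ≥ q }`. -/
theorem distNum_starsGraph (p q : ℕ) (hp : 1 ≤ p) (hq : 2 ≤ q) :
    distNum (starsGraph p q) = sInf {c : ℕ | q ≤ c * c.choose p} :=
  distNum_starsGraph_general p q hq
end

section
/- Let G be a split graph with KS-partition (A,B), H a graph disjoint from G, and G* = (G,A,B) ∘ H the composition: V(G*) = V(G) ∪ V(H), E(G*) = E(G) ∪ E(H) ∪ { uv : u ∈ A, v ∈ V(H) }. There exists an automorphism of G* mapping some u ∈ V(G) to some v ∈ V(H) if and only if either (i) u ∈ A with deg_G(u) = |A| - 1 and v is a dominant vertex of H (adjacent to all other vertices of H), or (ii) u ∈ B with deg_G(u) = |A| and v is an isolated vertex of H. -/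
/-- The Tyshkevich composition `(G,A,B) ∘ H`: take disjoint copies of `G` and `H` and join
every vertex of `A` to every vertex of `H`. -/
def compose {V₁ V₂ : Type*} (G : SimpleGraph V₁) (A : Finset V₁) (H : SimpleGraph V₂) :
    SimpleGraph (V₁ ⊕ V₂) where
  Adj x y := match x, y with
    | .inl u, .inl v => G.Adj u v
    | .inl u, .inr _ => u ∈ A
    | .inr _, .inl u => u ∈ A
    | .inr u, .inr v => H.Adj u v
  symm := ⟨by
    rintro (u | u) (v | v) h
    · exact G.adj_symm h
    · exact h
    · exact h
    · exact H.adj_symm h⟩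
  loopless := ⟨by
    rintro (u | u) h
    · exact G.irrefl h
    · exact H.irrefl h⟩

/-!
Automorphisms preserve degrees. In `G*`, a vertex `u` of `G` has degree `deg_G u + |V(H)|` if
`u ∈ A` and `deg_G u` if `u ∈ B`, while a vertex `v` of `H` has degree `|A| + deg_H v`. Since
`|A| - 1 ≤ deg_G u` on the clique `A`, `deg_G u ≤ |A|` on the independent set `B`, and
`deg_H v ≤ |V(H)| - 1`, equality of these degrees forces (i) or (ii). Conversely, under (i) or
(ii) the vertices `u` and `v` have the same neighbours in `G*` outside `{u, v}`, so transposing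
them is an automorphism.
-/

open Finset

namespace SimpleGraph

variable {V : Type*}

def swapIso [DecidableEq V] (G : SimpleGraph V) (a b : V)
    (h : ∀ x, x ≠ a → x ≠ b → (G.Adj a x ↔ G.Adj b x)) : G ≃g G where
  toEquiv := Equiv.swap a b
  map_rel_iff' {x y} := by
    simp only [Equiv.swap_apply_def]
    have := h x; have := h y
    split_ifs <;> subst_vars <;> grind [G.adj_comm, G.irrefl]

section Split

variable {G : SimpleGraph V} [Fintype V] [DecidableEq V] [DecidableRel G.Adj] {A B : Finset V} {u : V}

theorem IsClique.erase_subset_neighborFinset (hA : G.IsClique (A : Set V)) (hu : u ∈ A) :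
    A.erase u ⊆ G.neighborFinset u := fun w hw =>
  (G.mem_neighborFinset u w).mpr <| hA hu (mem_of_mem_erase hw) (ne_of_mem_erase hw).symm

theorem IsClique.card_sub_one_le_degree (hA : G.IsClique (A : Set V)) (hu : u ∈ A) :
    #A - 1 ≤ G.degree u := by
  simpa [card_erase_of_mem hu] using card_le_card (hA.erase_subset_neighborFinset hu)

theorem IsClique.neighborFinset_eq_erase (hA : G.IsClique (A : Set V)) (hu : u ∈ A)
    (hdeg : G.degree u = #A - 1) : G.neighborFinset u = A.erase u :=
  (eq_of_subset_of_card_le (hA.erase_subset_neighborFinset hu)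
    (by rw [card_neighborFinset_eq_degree, hdeg, card_erase_of_mem hu])).symm

theorem IsIndepSet.neighborFinset_subset (hAB : A ∪ B = univ) (hB : G.IsIndepSet (B : Set V))
    (hu : u ∈ B) : G.neighborFinset u ⊆ A := by
  intro w hw
  rw [mem_neighborFinset] at hw
  have hw' : w ∈ A ∪ B := hAB ▸ mem_univ w
  exact (mem_union.mp hw').resolve_right fun hwB => hB hu hwB hw.ne hw

theorem IsIndepSet.degree_le_card (hAB : A ∪ B = univ) (hB : G.IsIndepSet (B : Set V))
    (hu : u ∈ B) : G.degree u ≤ #A := by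
  simpa using card_le_card (hB.neighborFinset_subset hAB hu)

theorem IsIndepSet.neighborFinset_eq (hAB : A ∪ B = univ) (hB : G.IsIndepSet (B : Set V))
    (hu : u ∈ B) (hdeg : G.degree u = #A) : G.neighborFinset u = A :=
  eq_of_subset_of_card_le (hB.neighborFinset_subset hAB hu) (by simp [hdeg])

end Split

end SimpleGraph

section Compose

variable {V₁ V₂ : Type*} (G : SimpleGraph V₁) (A : Finset V₁) (H : SimpleGraph V₂)

@[simp] theorem compose_adj_inl_inl (a b : V₁) :
    (compose G A H).Adj (.inl a) (.inl b) ↔ G.Adj a b := Iff.rfl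

@[simp] theorem compose_adj_inl_inr (a : V₁) (b : V₂) :
    (compose G A H).Adj (.inl a) (.inr b) ↔ a ∈ A := Iff.rfl

@[simp] theorem compose_adj_inr_inl (a : V₂) (b : V₁) :
    (compose G A H).Adj (.inr a) (.inl b) ↔ b ∈ A := Iff.rfl

@[simp] theorem compose_adj_inr_inr (a b : V₂) :
    (compose G A H).Adj (.inr a) (.inr b) ↔ H.Adj a b := Iff.rfl

instance [DecidableEq V₁] [DecidableRel G.Adj] [DecidableRel H.Adj] :
    DecidableRel (compose G A H).Adj
  | .inl a, .inl b => decidable_of_iff _ (compose_adj_inl_inl G A H a b).symm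
  | .inl a, .inr b => decidable_of_iff _ (compose_adj_inl_inr G A H a b).symm
  | .inr a, .inl b => decidable_of_iff _ (compose_adj_inr_inl G A H a b).symm
  | .inr a, .inr b => decidable_of_iff _ (compose_adj_inr_inr G A H a b).symm

variable {G A H}

theorem exists_iso_compose_inl_eq_inr [DecidableEq V₁] [DecidableEq V₂] {u : V₁} {v : V₂}
    (hG : ∀ w, w ≠ u → (G.Adj u w ↔ w ∈ A)) (hH : ∀ w, w ≠ v → (u ∈ A ↔ H.Adj v w)) :
    ∃ π : compose G A H ≃g compose G A H, π (.inl u) = .inr v := by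
  refine ⟨(compose G A H).swapIso (.inl u) (.inr v) ?_, Equiv.swap_apply_left _ _⟩
  rintro (w | w) hu hv
  · simpa using hG w (by rintro rfl; exact hu rfl)
  · simpa using hH w (by rintro rfl; exact hv rfl)

variable [Fintype V₁] [Fintype V₂] [DecidableEq V₁] [DecidableRel G.Adj] [DecidableRel H.Adj]

theorem compose_degree_inl (u : V₁) :
    (compose G A H).degree (.inl u) = G.degree u + if u ∈ A then Fintype.card V₂ else 0 := by
  have : (compose G A H).neighborFinset (.inl u) =
      (G.neighborFinset u).disjSum (if u ∈ A then univ else ∅) := by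
    ext (w | w) <;> split_ifs <;> simp_all
  rw [← SimpleGraph.card_neighborFinset_eq_degree, this, card_disjSum,
    SimpleGraph.card_neighborFinset_eq_degree]
  split_ifs <;> simp

theorem compose_degree_inr (v : V₂) :
    (compose G A H).degree (.inr v) = #A + H.degree v := by
  have : (compose G A H).neighborFinset (.inr v) = A.disjSum (H.neighborFinset v) := by
    ext (w | w) <;> simp
  rw [← SimpleGraph.card_neighborFinset_eq_degree, this, card_disjSum,
    SimpleGraph.card_neighborFinset_eq_degree]

end Compose

/-- Characterization of automorphisms of `G* = (G,A,B) ∘ H` mapping a vertex of `G` to a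
vertex of `H`: such an automorphism exists iff either `u ∈ A` with `deg_G u = |A| - 1` and
`v` is dominant in `H`, or `u ∈ B` with `deg_G u = |A|` and `v` is isolated in `H`. -/
theorem aut_compose_cross {V₁ V₂ : Type*} [Fintype V₁] [Fintype V₂] [DecidableEq V₁]
    (G : SimpleGraph V₁) [DecidableRel G.Adj] (H : SimpleGraph V₂)
    (A B : Finset V₁)
    (hpart : A ∪ B = Finset.univ) (hdisj : Disjoint A B)
    (hclique : ∀ a ∈ A, ∀ b ∈ A, a ≠ b → G.Adj a b)
    (hindep : ∀ a ∈ B, ∀ b ∈ B, ¬ G.Adj a b)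
    (u : V₁) (v : V₂) :
    (∃ π : compose G A H ≃g compose G A H, π (Sum.inl u) = Sum.inr v) ↔
      ((u ∈ A ∧ G.degree u = A.card - 1 ∧ ∀ w, w ≠ v → H.Adj v w) ∨
       (u ∈ B ∧ G.degree u = A.card ∧ ∀ w, ¬ H.Adj v w)) := by
  classical
  have hA : G.IsClique (A : Set V₁) := fun a ha b hb hab => hclique a ha b hb hab
  have hB : G.IsIndepSet (B : Set V₁) := fun a ha b hb _ => hindep a ha b hb
  constructor
  · rintro ⟨π, hπ⟩
    have hdeg := π.degree_eq (.inl u)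
    rw [hπ, compose_degree_inl, compose_degree_inr] at hdeg
    have hvdeg := H.degree_lt_card_verts v
    rcases mem_union.mp (hpart ▸ mem_univ u : u ∈ A ∪ B) with hu | hu
    · have := hA.card_sub_one_le_degree hu
      simp only [hu, if_true] at hdeg
      have hv : H.IsUniversal v := (H.degree_eq_card_sub_one v).mp (by omega)
      exact .inl ⟨hu, by omega, fun w hw => hv hw.symm⟩
    · have := hB.degree_le_card hpart hu
      simp only [disjoint_right.mp hdisj hu, if_false] at hdeg
      have hv : H.IsIsolated v := (H.degree_eq_zero v).mp (by omega)
      exact .inr ⟨hu, by omega, hv⟩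
  · rintro (⟨hu, hdeg, hdom⟩ | ⟨hu, hdeg, hiso⟩)
    · have hN := hA.neighborFinset_eq_erase hu hdeg
      refine exists_iso_compose_inl_eq_inr (fun w hw => ?_) fun w hw => by simp [hu, hdom w hw]
      rw [← G.mem_neighborFinset, hN, mem_erase]
      exact and_iff_right hw
    · have hN := hB.neighborFinset_eq hpart hu hdeg
      refine exists_iso_compose_inl_eq_inr (fun w _ => ?_) fun w _ => ?_
      · rw [← G.mem_neighborFinset, hN]
      · simp [disjoint_right.mp hdisj hu, hiso w]
end

section
/- An n-vertex graph G with degree sequence d_1 ≥ d_2 ≥ ... ≥ d_n is a split graph if and only if Σ_{i=1}^h d_i = h(h-1) + Σ_{i=h+1}^n d_i, where h = max { i : d_i ≥ i - 1 }. Moreover, if equality holds, then h = ω(G) and the h vertices of largest degree induce a clique while the remaining vertices form an independent set (i.e., they form a KS-partition). -/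
/-!
For a vertex set `s` put `splitDefect s = #s (#s - 1) + Σ_{v ∉ s} deg v - Σ_{v ∈ s} deg v`.
Counting ordered adjacent pairs shows that it is twice the number of non-edges inside `s` plus
twice the number of edges inside `sᶜ`: it is nonnegative and vanishes exactly when `s` is a clique
and `sᶜ` an independent set. Writing `#s (#s - 1) = Σ_{i < #s} 2i` and bounding the degrees in `s`
by the `#s` largest ones, the defect of `s` is at least `Σ_v deg v - 2 Σ_{i < #s} (dᵢ - i)`, with
equality for the `#s` vertices of largest degree. As `dᵢ - i` is nonnegative for `i < h` and
negative for `h ≤ i`, the `h` vertices of largest degree minimise the defect, so `G` is split iff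
their defect vanishes, which is the equation of the theorem. A clique with more than `h` vertices would
contain a vertex outside this top set, of degree at least `h`; but all those have degree `< h`.
-/

open Finset

namespace Finset

variable {M : Type*} [AddCommMonoid M] [PartialOrder M] [IsOrderedAddMonoid M]

theorem sum_le_sum_range_card_of_antitoneOn {d : ℕ → M} {n : ℕ}
    (hanti : AntitoneOn d (Set.Iio n)) {s : Finset ℕ} (hs : s ⊆ range n) : ∑ i ∈ s, d i ≤ ∑ i ∈ range #s, d i := by
  induction s using Finset.induction_on_max with
  | empty => simp
  | insert a s hlt ih =>
    have ha : a ∉ s := fun h => lt_irrefl a (hlt a h)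
    have hcard : #s ≤ a := by
      simpa using card_le_card (fun x hx => mem_range.2 (hlt x hx) : s ⊆ range a)
    have han : a < n := mem_range.1 (hs (mem_insert_self a s))
    rw [sum_insert ha, card_insert_of_notMem ha, sum_range_succ, add_comm]
    exact add_le_add (ih ((subset_insert a s).trans hs)) (hanti (hcard.trans_lt han) han hcard)

theorem sum_range_le_sum_range_of_nonneg_of_nonpos {f : ℕ → M} {h n k : ℕ}
    (hpos : ∀ i < h, 0 ≤ f i) (hneg : ∀ i, h ≤ i → i < n → f i ≤ 0) (hk : k ≤ n) :
    ∑ i ∈ range k, f i ≤ ∑ i ∈ range h, f i := by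
  rcases le_total k h with hkh | hhk
  · rw [← sum_range_add_sum_Ico f hkh]
    exact le_add_of_nonneg_right (sum_nonneg fun i hi => hpos i (mem_Ico.1 hi).2)
  · rw [← sum_range_add_sum_Ico f hhk]
    exact add_le_of_nonpos_right
      (sum_nonpos fun i hi => hneg i (mem_Ico.1 hi).1 ((mem_Ico.1 hi).2.trans_le hk))

end Finset

namespace SimpleGraph

variable {V : Type*} (G : SimpleGraph V) [DecidableRel G.Adj]

theorem card_interedges_eq_sum (s t : Finset V) :
    #(G.interedges s t) = ∑ v ∈ s, ∑ w ∈ t, if G.Adj v w then 1 else 0 := by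
  rw [interedges_def, card_filter, sum_product]

theorem card_interedges_comm (s t : Finset V) : #(G.interedges s t) = #(G.interedges t s) :=
  have := G.symm
  Rel.card_interedges_comm s t

theorem interedges_self_subset_offDiag (s : Finset V) : G.interedges s s ⊆ s.offDiag :=
  fun x hx => by
    obtain ⟨h1, h2, hadj⟩ := (G.mem_interedges_iff).1 hx
    exact mem_offDiag.2 ⟨h1, h2, hadj.ne⟩

theorem interedges_self_eq_offDiag_iff (s : Finset V) :
    G.interedges s s = s.offDiag ↔ G.IsClique (s : Set V) := by
  constructor
  · intro h a ha b hb hab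
    have : (a, b) ∈ G.interedges s s := h ▸ mem_offDiag.2 ⟨ha, hb, hab⟩
    exact ((G.mem_interedges_iff).1 this).2.2
  · intro h
    refine (G.interedges_self_subset_offDiag s).antisymm fun x hx => ?_
    obtain ⟨h1, h2, hne⟩ := mem_offDiag.1 hx
    exact (G.mem_interedges_iff).2 ⟨h1, h2, h h1 h2 hne⟩

theorem interedges_self_eq_empty_iff (s : Finset V) :
    G.interedges s s = ∅ ↔ G.IsIndepSet (s : Set V) := by
  rw [eq_empty_iff_forall_notMem]
  constructor
  · intro h a ha b hb _ hadj
    exact h (a, b) ((G.mem_interedges_iff).2 ⟨ha, hb, hadj⟩)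
  · rintro h ⟨a, b⟩ hx
    obtain ⟨ha, hb, hadj⟩ := (G.mem_interedges_iff).1 hx
    exact h ha hb hadj.ne hadj

theorem card_interedges_self_le (s : Finset V) : #(G.interedges s s) ≤ #s * (#s - 1) := by
  rw [Nat.mul_sub_one, ← offDiag_card]
  exact card_le_card (G.interedges_self_subset_offDiag s)

theorem card_interedges_self_eq_iff (s : Finset V) :
    #(G.interedges s s) = #s * (#s - 1) ↔ G.IsClique (s : Set V) := by
  rw [Nat.mul_sub_one, ← offDiag_card, ← interedges_self_eq_offDiag_iff]
  exact ⟨fun h => eq_of_subset_of_card_le (G.interedges_self_subset_offDiag s) h.ge,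
    congrArg card⟩

variable [Fintype V] [DecidableEq V]

theorem sum_degree_eq_card_interedges_add (s : Finset V) :
    ∑ v ∈ s, G.degree v = #(G.interedges s s) + #(G.interedges s sᶜ) := by
  rw [card_interedges_eq_sum, card_interedges_eq_sum, ← sum_add_distrib]
  refine sum_congr rfl fun v _ => ?_
  rw [sum_add_sum_compl, ← card_filter, ← neighborFinset_eq_filter, card_neighborFinset_eq_degree]

variable {G} in
theorem IsClique.card_sub_one_le_degree_s16 {s : Finset V}
    (hs : G.IsClique (s : Set V)) {v : V} (hv : v ∈ s) : #s - 1 ≤ G.degree v := by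
  rw [← card_erase_of_mem hv, ← card_neighborFinset_eq_degree]
  refine card_le_card fun w hw => ?_
  obtain ⟨hwv, hw⟩ := mem_erase.1 hw
  exact (G.mem_neighborFinset v w).2 (hs hv hw hwv.symm)

theorem cliqueNum_eq_card_of_isClique {s : Finset V} (hs : G.IsClique (s : Set V))
    (hdeg : ∀ v ∉ s, G.degree v < #s) : G.cliqueNum = #s := by
  refine le_antisymm ?_ hs.card_le_cliqueNum
  obtain ⟨c, hc⟩ := G.exists_isNClique_cliqueNum
  by_contra! hlt
  obtain ⟨v, hvc, hvs⟩ := exists_mem_notMem_of_card_lt_card (hc.card_eq ▸ hlt)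
  have := hc.isClique.card_sub_one_le_degree_s16 hvc
  have := hdeg v hvs
  have := hc.card_eq
  omega

def splitDefect (s : Finset V) : ℤ :=
  (#s * (#s - 1) : ℕ) + ∑ v ∈ sᶜ, (G.degree v : ℤ) - ∑ v ∈ s, (G.degree v : ℤ)

theorem splitDefect_eq (s : Finset V) :
    G.splitDefect s =
      ((#s * (#s - 1) - #(G.interedges s s) : ℕ) : ℤ) + #(G.interedges sᶜ sᶜ) := by
  have h1 := G.sum_degree_eq_card_interedges_add s
  have h2 := G.sum_degree_eq_card_interedges_add sᶜ
  rw [compl_compl, G.card_interedges_comm sᶜ s] at h2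
  have := G.card_interedges_self_le s
  rw [splitDefect, ← Nat.cast_sum, ← Nat.cast_sum, h1, h2]
  push_cast [this]
  ring

theorem splitDefect_eq_sub (s : Finset V) :
    G.splitDefect s =
      (#s * (#s - 1) : ℕ) + ∑ v, (G.degree v : ℤ) - 2 * ∑ v ∈ s, (G.degree v : ℤ) := by
  rw [splitDefect, ← sum_add_sum_compl s]
  ring

theorem splitDefect_nonneg (s : Finset V) : 0 ≤ G.splitDefect s := by
  rw [splitDefect_eq]; positivity

theorem splitDefect_eq_zero_iff (s : Finset V) :
    G.splitDefect s = 0 ↔ G.IsClique (s : Set V) ∧ G.IsIndepSet ((sᶜ : Finset V) : Set V) := by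
  rw [splitDefect_eq, ← card_interedges_self_eq_iff, ← interedges_self_eq_empty_iff,
    ← card_eq_zero]
  have := G.card_interedges_self_le s
  omega

theorem splitDefect_eq_zero_iff_sum_degree (s : Finset V) :
    G.splitDefect s = 0 ↔ ∑ v ∈ s, G.degree v = #s * (#s - 1) + ∑ v ∈ sᶜ, G.degree v := by
  rw [splitDefect, ← Nat.cast_sum, ← Nat.cast_sum]
  omega

theorem exists_splitDefect_eq_zero_iff :
    (∃ s, G.splitDefect s = 0) ↔ ∃ A B : Finset V, A ∪ B = univ ∧ Disjoint A B ∧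
      (∀ a ∈ A, ∀ b ∈ A, a ≠ b → G.Adj a b) ∧ (∀ a ∈ B, ∀ b ∈ B, ¬ G.Adj a b) := by
  simp only [splitDefect_eq_zero_iff]
  constructor
  · rintro ⟨s, hs, hsc⟩
    exact ⟨s, sᶜ, union_compl s, disjoint_compl_right, fun a ha b hb => hs ha hb,
      fun a ha b hb hab => hsc ha hb hab.ne hab⟩
  · rintro ⟨A, B, hAB, hdisj, hA, hB⟩
    obtain rfl : B = Aᶜ := (IsCompl.symm ⟨hdisj, codisjoint_iff.2 hAB⟩).eq_compl
    exact ⟨A, fun a ha b hb => hA a ha b hb, fun a ha b hb _ => hB a ha b hb⟩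

end SimpleGraph

open SimpleGraph

section DegreeSequence

variable {n h : ℕ} {d : ℕ → ℕ}

theorem le_apply_of_lt_of_isGreatest (hanti : AntitoneOn d (Set.Iio n))
    (hh : IsGreatest {i | 1 ≤ i ∧ i ≤ n ∧ i - 1 ≤ d (i - 1)} h) {i : ℕ} (hi : i < h) :
    i ≤ d i := by
  obtain ⟨⟨-, hhn, hdh⟩, -⟩ := hh
  calc i ≤ h - 1 := by omega
    _ ≤ d (h - 1) := hdh
    _ ≤ d i := hanti (Set.mem_Iio.2 (by omega)) (Set.mem_Iio.2 (by omega)) (by omega)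

theorem apply_lt_of_isGreatest (hanti : AntitoneOn d (Set.Iio n))
    (hh : IsGreatest {i | 1 ≤ i ∧ i ≤ n ∧ i - 1 ≤ d (i - 1)} h) {i : ℕ} (hhi : h ≤ i)
    (hin : i < n) : d i < h := by
  have hdh : d h < h := by
    by_contra! hge
    have : h + 1 ≤ h := hh.2 ⟨by omega, by omega, by simpa using hge⟩
    omega
  exact (hanti (Set.mem_Iio.2 (by omega)) (Set.mem_Iio.2 hin) hhi).trans_lt hdh

def rankEmbedding (e : Fin n ≃ Fin n) : Fin n ↪ ℕ := e.symm.toEmbedding.trans Fin.valEmbedding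

def topVertices (e : Fin n ≃ Fin n) (h : ℕ) : Finset (Fin n) := {v | (e.symm v : ℕ) < h}

theorem map_topVertices (e : Fin n ≃ Fin n) (hhn : h ≤ n) :
    (topVertices e h).map (rankEmbedding e) = range h := by
  ext i
  simp only [rankEmbedding, topVertices, mem_map, mem_filter, mem_univ, true_and,
    Function.Embedding.trans_apply, Function.Embedding.coeFn_mk, Fin.valEmbedding_apply,
    mem_range]
  rw [e.surjective.exists]
  simpa [Fin.exists_iff] using fun hi : i < h => hi.trans_le hhn

theorem map_compl_topVertices (e : Fin n ≃ Fin n) (h : ℕ) :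
    (topVertices e h)ᶜ.map (rankEmbedding e) = Ico h n := by
  ext i
  simp only [rankEmbedding, topVertices, compl_filter, not_lt, mem_map, mem_filter, mem_univ,
    true_and, Function.Embedding.trans_apply, Function.Embedding.coeFn_mk,
    Fin.valEmbedding_apply, mem_Ico]
  rw [e.surjective.exists]
  simp [Fin.exists_iff]

theorem card_topVertices (e : Fin n ≃ Fin n) (hhn : h ≤ n) : #(topVertices e h) = h := by
  rw [← card_map (rankEmbedding e), map_topVertices e hhn, card_range]

variable {G : SimpleGraph (Fin n)} [DecidableRel G.Adj] {e : Fin n ≃ Fin n}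

theorem degree_eq_apply_symm (hd : ∀ i : Fin n, d i = G.degree (e i)) (v : Fin n) :
    G.degree v = d (e.symm v) := by
  rw [hd, e.apply_symm_apply]

theorem sum_degree_eq_sum_map (hd : ∀ i : Fin n, d i = G.degree (e i)) (s : Finset (Fin n)) :
    ∑ v ∈ s, G.degree v = ∑ i ∈ s.map (rankEmbedding e), d i := by
  rw [sum_map]
  exact sum_congr rfl fun v _ => degree_eq_apply_symm hd v

theorem degree_le_degree_of_mem_topVertices (hd : ∀ i : Fin n, d i = G.degree (e i))
    (hanti : AntitoneOn d (Set.Iio n)) {a b : Fin n} (ha : a ∈ topVertices e h)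
    (hb : b ∉ topVertices e h) : G.degree b ≤ G.degree a := by
  simp only [topVertices, mem_filter, mem_univ, true_and, not_lt] at ha hb
  rw [degree_eq_apply_symm hd, degree_eq_apply_symm hd]
  exact hanti (Set.mem_Iio.2 (e.symm a).isLt) (Set.mem_Iio.2 (e.symm b).isLt) (by omega)

theorem degree_lt_of_notMem_topVertices (hd : ∀ i : Fin n, d i = G.degree (e i))
    (hanti : AntitoneOn d (Set.Iio n))
    (hh : IsGreatest {i | 1 ≤ i ∧ i ≤ n ∧ i - 1 ≤ d (i - 1)} h) {v : Fin n}
    (hv : v ∉ topVertices e h) : G.degree v < h := by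
  simp only [topVertices, mem_filter, mem_univ, true_and, not_lt] at hv
  rw [degree_eq_apply_symm hd]
  exact apply_lt_of_isGreatest hanti hh hv (e.symm v).isLt

theorem splitDefect_topVertices_eq_zero_iff (hd : ∀ i : Fin n, d i = G.degree (e i))
    (hhn : h ≤ n) : G.splitDefect (topVertices e h) = 0 ↔
      ∑ i ∈ range h, d i = h * (h - 1) + ∑ i ∈ Ico h n, d i := by
  rw [splitDefect_eq_zero_iff_sum_degree, card_topVertices e hhn, sum_degree_eq_sum_map hd,
    sum_degree_eq_sum_map hd, map_topVertices e hhn, map_compl_topVertices]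

theorem splitDefect_topVertices_le (hd : ∀ i : Fin n, d i = G.degree (e i))
    (hanti : AntitoneOn d (Set.Iio n))
    (hh : IsGreatest {i | 1 ≤ i ∧ i ≤ n ∧ i - 1 ≤ d (i - 1)} h) (s : Finset (Fin n)) :
    G.splitDefect (topVertices e h) ≤ G.splitDefect s := by
  have hhn : h ≤ n := hh.1.2.1
  have hs : ∑ v ∈ s, G.degree v ≤ ∑ i ∈ range #s, d i := by
    rw [sum_degree_eq_sum_map hd, ← card_map (rankEmbedding e)]
    refine sum_le_sum_range_card_of_antitoneOn hanti fun i hi => ?_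
    obtain ⟨v, -, rfl⟩ := mem_map.1 hi
    exact mem_range.2 (e.symm v).isLt
  have hT : ∑ v ∈ topVertices e h, G.degree v = ∑ i ∈ range h, d i := by
    rw [sum_degree_eq_sum_map hd, map_topVertices e hhn]
  have hgain : ∑ i ∈ range #s, ((d i : ℤ) - i) ≤ ∑ i ∈ range h, ((d i : ℤ) - i) :=
    sum_range_le_sum_range_of_nonneg_of_nonpos
      (fun i hi => sub_nonneg.2 (by exact_mod_cast le_apply_of_lt_of_isGreatest hanti hh hi))
      (fun i hhi hin => sub_nonpos.2
        (by exact_mod_cast ((apply_lt_of_isGreatest hanti hh hhi hin).trans_le hhi).le))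
      (by simpa using card_le_univ s)
  have htri (m : ℕ) : ((m * (m - 1) : ℕ) : ℤ) = 2 * ∑ i ∈ range m, (i : ℤ) := by
    rw [← sum_range_id_mul_two]; push_cast; ring
  rw [splitDefect_eq_sub, splitDefect_eq_sub, card_topVertices e hhn, htri, htri]
  simp only [sum_sub_distrib] at hgain
  have hs' : ∑ v ∈ s, (G.degree v : ℤ) ≤ ∑ i ∈ range #s, (d i : ℤ) := by exact_mod_cast hs
  have hT' : ∑ v ∈ topVertices e h, (G.degree v : ℤ) = ∑ i ∈ range h, (d i : ℤ) := by
    exact_mod_cast hT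
  linarith

end DegreeSequence

theorem hammer_simeone_general (n : ℕ) (G : SimpleGraph (Fin n)) [DecidableRel G.Adj]
    (d : ℕ → ℕ) (e : Fin n ≃ Fin n)
    (hd : ∀ i : Fin n, d i = G.degree (e i))
    (hsorted : ∀ i j : ℕ, i ≤ j → j < n → d j ≤ d i)
    (h : ℕ)
    (hh : IsGreatest {i | 1 ≤ i ∧ i ≤ n ∧ i - 1 ≤ d (i - 1)} h) :
    ((∑ i ∈ Finset.range h, d i = h * (h - 1) + ∑ i ∈ Finset.Ico h n, d i) ↔
      ∃ A B : Finset (Fin n), A ∪ B = Finset.univ ∧ Disjoint A B ∧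
        (∀ a ∈ A, ∀ b ∈ A, a ≠ b → G.Adj a b) ∧ (∀ a ∈ B, ∀ b ∈ B, ¬ G.Adj a b)) ∧
    ((∑ i ∈ Finset.range h, d i = h * (h - 1) + ∑ i ∈ Finset.Ico h n, d i) →
      G.cliqueNum = h ∧
      ∃ A B : Finset (Fin n), A ∪ B = Finset.univ ∧ Disjoint A B ∧ A.card = h ∧
        (∀ a ∈ A, ∀ b ∈ A, a ≠ b → G.Adj a b) ∧ (∀ a ∈ B, ∀ b ∈ B, ¬ G.Adj a b) ∧
        (∀ a ∈ A, ∀ b ∈ B, G.degree b ≤ G.degree a)) := by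
  have hanti : AntitoneOn d (Set.Iio n) := fun i _ j hj hij => hsorted i j hij hj
  have hhn : h ≤ n := hh.1.2.1
  set T := topVertices e h
  have hcrit := splitDefect_topVertices_eq_zero_iff (G := G) hd hhn
  have hsplit : G.splitDefect T = 0 ↔ ∃ s, G.splitDefect s = 0 :=
    ⟨fun hT => ⟨T, hT⟩, fun ⟨s, hs⟩ => le_antisymm
      (hs ▸ splitDefect_topVertices_le hd hanti hh s) (G.splitDefect_nonneg T)⟩
  refine ⟨hcrit.symm.trans (hsplit.trans G.exists_splitDefect_eq_zero_iff), fun heq => ?_⟩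
  obtain ⟨hclique, hindep⟩ := (G.splitDefect_eq_zero_iff T).1 (hcrit.2 heq)
  have hcard : #T = h := card_topVertices e hhn
  refine ⟨(G.cliqueNum_eq_card_of_isClique hclique fun v hv => hcard ▸
      degree_lt_of_notMem_topVertices hd hanti hh hv).trans hcard,
    T, Tᶜ, union_compl T, disjoint_compl_right, hcard, fun a ha b hb => hclique ha hb,
    fun a ha b hb hab => hindep ha hb hab.ne hab,
    fun a ha b hb => degree_le_degree_of_mem_topVertices hd hanti ha (mem_compl.1 hb)⟩

/-- The Hammer–Simeone splittance criterion: a graph with non-increasing degree sequence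
`d₁ ≥ ... ≥ dₙ` (here `d` is 0-indexed, so `d i` is the `(i+1)`-st largest degree) is split
iff `Σ_{i=1}^h dᵢ = h(h-1) + Σ_{i=h+1}^n dᵢ`, where `h = max { i : dᵢ ≥ i-1 }` (1-indexed).
Moreover, in case of equality, `h = ω(G)`, and the `h` vertices of largest degree induce a
clique while the rest form an independent set. -/
theorem hammer_simeone (n : ℕ) (hn : 2 ≤ n) (G : SimpleGraph (Fin n)) [DecidableRel G.Adj]
    (d : ℕ → ℕ) (e : Fin n ≃ Fin n)
    (hd : ∀ i : Fin n, d i = G.degree (e i))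
    (hsorted : ∀ i j : ℕ, i ≤ j → j < n → d j ≤ d i)
    (h : ℕ)
    (hh : IsGreatest {i | 1 ≤ i ∧ i ≤ n ∧ i - 1 ≤ d (i - 1)} h) :
    ((∑ i ∈ Finset.range h, d i = h * (h - 1) + ∑ i ∈ Finset.Ico h n, d i) ↔
      ∃ A B : Finset (Fin n), A ∪ B = Finset.univ ∧ Disjoint A B ∧
        (∀ a ∈ A, ∀ b ∈ A, a ≠ b → G.Adj a b) ∧ (∀ a ∈ B, ∀ b ∈ B, ¬ G.Adj a b)) ∧
    ((∑ i ∈ Finset.range h, d i = h * (h - 1) + ∑ i ∈ Finset.Ico h n, d i) →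
      G.cliqueNum = h ∧
      ∃ A B : Finset (Fin n), A ∪ B = Finset.univ ∧ Disjoint A B ∧ A.card = h ∧
        (∀ a ∈ A, ∀ b ∈ A, a ≠ b → G.Adj a b) ∧ (∀ a ∈ B, ∀ b ∈ B, ¬ G.Adj a b) ∧
        (∀ a ∈ A, ∀ b ∈ B, G.degree b ≤ G.degree a)) :=
  hammer_simeone_general n G d e hd hsorted h hh
end
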